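/- Let μ, ν be probability measures on ℝ with finite first moments and μ ≼ ν in convex order. For n ≥ 1, define the discrete measures μ^n and ν^n supported on {k/n : k ∈ ℤ} by μ^n({k/n}) = ∫_{[(k−1)/n, (k+1)/n)} (1 − |nx − k|) μ(dx), and similarly for ν^n from ν. Then: (a) μ^n and ν^n are probability measures with finite first moments; (b) μ^n ≼ ν^n, μ ≼ μ^n, and ν ≼ ν^n in convex order; (c) W(μ^n, μ) ≤ 1/n and W(ν^n, ν) ≤ 1/n. -/

import Mathlib

open MeasureTheory Filter
open scoped ENNReal

noncomputable section

def Coupling (μ ν : Measure ℝ) : Set (Measure (ℝ × ℝ)) :=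
  {P | P.map Prod.fst = μ ∧ P.map Prod.snd = ν}

/-- Wasserstein-1 distance on probability measures on ℝ. -/
def W1 (μ ν : Measure ℝ) : ℝ≥0∞ :=
  ⨅ P ∈ Coupling μ ν, ∫⁻ p, ENNReal.ofReal |p.1 - p.2| ∂P

/-- An ε-approximating martingale coupling of (μ, ν): a coupling P with
E_P[h(X)(Y − X)] ≤ ε‖h‖ for all bounded continuous h (equivalently
E_P[|E_P[Y|X] − X|] ≤ ε). -/
def IsAMM (ε : ℝ) (μ ν : Measure ℝ) (P : Measure (ℝ × ℝ)) : Prop :=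
  IsProbabilityMeasure P ∧ P.map Prod.fst = μ ∧ P.map Prod.snd = ν ∧
  ∀ h : BoundedContinuousFunction ℝ ℝ, ∫ p, h p.1 * (p.2 - p.1) ∂P ≤ ε * ‖h‖

/-- The relaxed martingale optimal transport value P_ε(μ, ν). -/
def Pval (ε : ℝ) (μ ν : Measure ℝ) (c : ℝ → ℝ → ℝ) : ℝ :=
  sSup {x | ∃ P, IsAMM ε μ ν P ∧ x = ∫ p, c p.1 p.2 ∂P}

/-- Convex order: ∫ f dμ ≤ ∫ f dν for all convex Lipschitz f. -/
def ConvexOrder (μ ν : Measure ℝ) : Prop :=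
  ∀ f : ℝ → ℝ, ConvexOn ℝ Set.univ f → (∃ L, ∀ x y, |f x - f y| ≤ L * |x - y|) →
    ∫ x, f x ∂μ ≤ ∫ x, f x ∂ν

/-- Convex order tested on all convex functions of linear growth. -/
def ConvexOrderLG (μ ν : Measure ℝ) : Prop :=
  ∀ f : ℝ → ℝ, ConvexOn ℝ Set.univ f → (∃ A B : ℝ, ∀ x, |f x| ≤ A + B * |x|) →
    ∫ x, f x ∂μ ≤ ∫ x, f x ∂ν

/-- The Dolinsky–Soner discretization of μ on the grid (k/n)_{k ∈ ℤ}. -/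
def dsDiscretization (n : ℕ) (μ : Measure ℝ) : Measure ℝ :=
  Measure.sum fun k : ℤ =>
    (ENNReal.ofReal (∫ x in Set.Ico (((k : ℝ) - 1) / n) (((k : ℝ) + 1) / n),
        (1 - |n * x - k|) ∂μ)) • Measure.dirac ((k : ℝ) / n)

namespace DSAux
open Set

/-- The interval on which the hat function at grid point `k/n` is supported. -/
def J (n : ℕ) (k : ℤ) : Set ℝ := Set.Ico (((k : ℝ) - 1) / n) (((k : ℝ) + 1) / n)

/-- The hat function at grid point `k/n`. -/
def w (n : ℕ) (k : ℤ) (x : ℝ) : ℝ := 1 - |(n : ℝ) * x - k|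

/-- Piecewise-linear interpolation of `f` on the grid `(k/n)`. -/
def interp (n : ℕ) (f : ℝ → ℝ) (x : ℝ) : ℝ :=
  (1 - ((n : ℝ) * x - ⌊(n : ℝ) * x⌋)) * f ((⌊(n : ℝ) * x⌋ : ℝ) / n) +
    ((n : ℝ) * x - ⌊(n : ℝ) * x⌋) * f (((⌊(n : ℝ) * x⌋ : ℝ) + 1) / n)

/-- `ℝ≥0∞`-valued interpolation. -/
def eInterp (n : ℕ) (g : ℝ → ℝ≥0∞) (x : ℝ) : ℝ≥0∞ :=
  ENNReal.ofReal (1 - ((n : ℝ) * x - ⌊(n : ℝ) * x⌋)) * g ((⌊(n : ℝ) * x⌋ : ℝ) / n) +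
    ENNReal.ofReal ((n : ℝ) * x - ⌊(n : ℝ) * x⌋) * g (((⌊(n : ℝ) * x⌋ : ℝ) + 1) / n)

variable {n : ℕ}

lemma npos (hn : 1 ≤ n) : (0 : ℝ) < n := by exact_mod_cast Nat.pos_of_ne_zero (by omega)

lemma frac_nonneg (x : ℝ) : 0 ≤ (n : ℝ) * x - ⌊(n : ℝ) * x⌋ :=
  sub_nonneg.2 (Int.floor_le _)

lemma frac_lt_one (x : ℝ) : (n : ℝ) * x - ⌊(n : ℝ) * x⌋ < 1 :=
  sub_lt_iff_lt_add.2 (by linarith [Int.lt_floor_add_one ((n : ℝ) * x)])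

lemma w_floor (x : ℝ) : w n ⌊(n : ℝ) * x⌋ x = 1 - ((n : ℝ) * x - ⌊(n : ℝ) * x⌋) := by
  unfold w
  rw [abs_of_nonneg (frac_nonneg x)]

lemma w_floor_succ (x : ℝ) : w n (⌊(n : ℝ) * x⌋ + 1) x = (n : ℝ) * x - ⌊(n : ℝ) * x⌋ := by
  unfold w
  push_cast
  rw [abs_of_nonpos (by linarith [frac_lt_one (n := n) x])]
  ring

lemma w_le_one (k : ℤ) (x : ℝ) : w n k x ≤ 1 := by
  unfold w; linarith [abs_nonneg ((n : ℝ) * x - k)]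

lemma measJ (k : ℤ) : MeasurableSet (J n k) := measurableSet_Ico

lemma w_cont (k : ℤ) : Continuous (w n k) :=
  continuous_const.sub (((continuous_const.mul continuous_id).sub continuous_const).abs)

lemma mem_J_bounds (hn : 1 ≤ n) {k : ℤ} {x : ℝ} (hx : x ∈ J n k) :
    (k : ℝ) - 1 ≤ (n : ℝ) * x ∧ (n : ℝ) * x < (k : ℝ) + 1 := by
  obtain ⟨h1, h2⟩ := hx
  have h0 := npos hn
  rw [div_le_iff₀ h0] at h1
  rw [lt_div_iff₀ h0] at h2
  constructor <;> linarith

lemma mem_J_iff (hn : 1 ≤ n) {k : ℤ} {x : ℝ} :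
    x ∈ J n k ↔ k = ⌊(n : ℝ) * x⌋ ∨ k = ⌊(n : ℝ) * x⌋ + 1 := by
  have h0 := npos hn
  constructor
  · intro hx
    obtain ⟨h1, h2⟩ := mem_J_bounds hn hx
    have e1 : k - 1 ≤ ⌊(n : ℝ) * x⌋ := Int.le_floor.mpr (by push_cast; linarith)
    have e2 : ⌊(n : ℝ) * x⌋ < k + 1 := Int.floor_lt.mpr (by push_cast; linarith)
    omega
  · have hfl := Int.floor_le ((n : ℝ) * x)
    have hfu := Int.lt_floor_add_one ((n : ℝ) * x)
    rintro (rfl | rfl) <;> constructor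
    · rw [div_le_iff₀ h0]; linarith
    · rw [lt_div_iff₀ h0]; push_cast; linarith
    · rw [div_le_iff₀ h0]; push_cast; linarith
    · rw [lt_div_iff₀ h0]; push_cast; linarith

lemma w_nonneg (hn : 1 ≤ n) {k : ℤ} {x : ℝ} (hx : x ∈ J n k) : 0 ≤ w n k x := by
  obtain ⟨h1, h2⟩ := mem_J_bounds hn hx
  unfold w
  have : |(n : ℝ) * x - k| ≤ 1 := abs_le.mpr ⟨by linarith, by linarith⟩
  linarith

lemma dist_le_of_mem_J (hn : 1 ≤ n) {k : ℤ} {x : ℝ} (hx : x ∈ J n k) :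
    |(k : ℝ) / n - x| ≤ 1 / n := by
  have h0 := npos hn
  obtain ⟨h1, h2⟩ := mem_J_bounds hn hx
  have he : (k : ℝ) / n - x = ((k : ℝ) - n * x) / n := by field_simp
  rw [he, abs_div, abs_of_pos h0, div_le_div_iff_of_pos_right h0]
  exact abs_le.mpr ⟨by linarith, by linarith⟩

lemma key_tsum {M : Type*} [AddCommMonoid M] [TopologicalSpace M] [T2Space M]
    (hn : 1 ≤ n) (ψ : ℤ → ℝ → M) (x : ℝ) :
    ∑' k : ℤ, (J n k).indicator (ψ k) x = ψ ⌊(n : ℝ) * x⌋ x + ψ (⌊(n : ℝ) * x⌋ + 1) x := by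
  set m := ⌊(n : ℝ) * x⌋ with hm
  have hx1 : x ∈ J n m := (mem_J_iff hn).mpr (Or.inl rfl)
  have hx2 : x ∈ J n (m + 1) := (mem_J_iff hn).mpr (Or.inr rfl)
  rw [tsum_eq_sum (s := ({m, m + 1} : Finset ℤ)) (fun k hk => ?_)]
  · rw [Finset.sum_pair (by omega)]
    rw [Set.indicator_of_mem hx1, Set.indicator_of_mem hx2]
  · apply Set.indicator_of_notMem
    intro hxk
    rcases (mem_J_iff hn).mp hxk with rfl | rfl <;>
      simp_all [Finset.mem_insert, Finset.mem_singleton]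


variable {μ : Measure ℝ}

lemma w_integrableOn (hn : 1 ≤ n) [IsProbabilityMeasure μ] (k : ℤ) :
    Integrable (fun x => w n k x) (μ.restrict (J n k)) := by
  refine (integrable_const (1 : ℝ)).mono' ((w_cont k).aestronglyMeasurable) ?_
  refine (ae_restrict_iff' (measJ k)).2 (ae_of_all _ fun x hx => ?_)
  rw [Real.norm_eq_abs, abs_of_nonneg (w_nonneg hn hx)]
  exact w_le_one k x

lemma w_nonneg_ae (hn : 1 ≤ n) (k : ℤ) :
    0 ≤ᵐ[μ.restrict (J n k)] fun x => w n k x :=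
  (ae_restrict_iff' (measJ k)).2 (ae_of_all _ fun x hx => w_nonneg hn hx)

lemma ofReal_intw (hn : 1 ≤ n) [IsProbabilityMeasure μ] (k : ℤ) :
    ENNReal.ofReal (∫ x in J n k, w n k x ∂μ) =
      ∫⁻ x in J n k, ENNReal.ofReal (w n k x) ∂μ :=
  ofReal_integral_eq_lintegral_ofReal (w_integrableOn hn k) (w_nonneg_ae hn k)

lemma meas_ofReal_w (k : ℤ) : Measurable fun x => ENNReal.ofReal (w n k x) :=
  (w_cont k).measurable.ennreal_ofReal

/-- The central summation identity. -/
lemma sum_eq (hn : 1 ≤ n) (μ : Measure ℝ) (g : ℝ → ℝ≥0∞) :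
    ∑' k : ℤ, (∫⁻ x in J n k, ENNReal.ofReal (w n k x) ∂μ) * g ((k : ℝ) / n) =
      ∫⁻ x, eInterp n g x ∂μ := by
  have step1 : ∀ k : ℤ, (∫⁻ x in J n k, ENNReal.ofReal (w n k x) ∂μ) * g ((k : ℝ) / n) =
      ∫⁻ x, (J n k).indicator (fun x => ENNReal.ofReal (w n k x) * g ((k : ℝ) / n)) x ∂μ := by
    intro k
    rw [lintegral_indicator (measJ k), lintegral_mul_const _ (meas_ofReal_w k)]
  simp_rw [step1]
  rw [← lintegral_tsum fun k =>
    (((meas_ofReal_w k).mul_const _).indicator (measJ k)).aemeasurable]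
  refine lintegral_congr fun x => ?_
  rw [key_tsum hn]
  unfold eInterp
  rw [w_floor, w_floor_succ]
  push_cast
  rfl

lemma lintegral_ds (hn : 1 ≤ n) [IsProbabilityMeasure μ] {g : ℝ → ℝ≥0∞} (hg : Measurable g) :
    ∫⁻ x, g x ∂(dsDiscretization n μ) = ∫⁻ x, eInterp n g x ∂μ := by
  rw [dsDiscretization, lintegral_sum_measure]
  have step : ∀ k : ℤ,
      ∫⁻ x, g x ∂((ENNReal.ofReal (∫ x in Set.Ico (((k : ℝ) - 1) / n) (((k : ℝ) + 1) / n),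
          (1 - |(n : ℝ) * x - k|) ∂μ)) • Measure.dirac ((k : ℝ) / n)) =
        (∫⁻ x in J n k, ENNReal.ofReal (w n k x) ∂μ) * g ((k : ℝ) / n) := by
    intro k
    rw [lintegral_smul_measure, lintegral_dirac' _ hg]
    congr 1
    exact ofReal_intw hn k
  simp_rw [step]
  exact sum_eq hn μ g

lemma eInterp_const (hn : 1 ≤ n) (c : ℝ≥0∞) (x : ℝ) : eInterp n (fun _ => c) x = c := by
  unfold eInterp
  rw [← add_mul, ← ENNReal.ofReal_add (by linarith [frac_lt_one (n := n) x]) (frac_nonneg x)]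
  norm_num

lemma eInterp_le (hn : 1 ≤ n) {g : ℝ → ℝ≥0∞} {c : ℝ≥0∞} (x : ℝ)
    (h1 : g ((⌊(n : ℝ) * x⌋ : ℝ) / n) ≤ c) (h2 : g (((⌊(n : ℝ) * x⌋ : ℝ) + 1) / n) ≤ c) :
    eInterp n g x ≤ c := by
  calc eInterp n g x ≤ eInterp n (fun _ => c) x :=
        add_le_add (mul_le_mul_right h1 _) (mul_le_mul_right h2 _)
    _ = c := eInterp_const hn c x

lemma grid_abs (hn : 1 ≤ n) (x : ℝ) :
    |(⌊(n : ℝ) * x⌋ : ℝ) / n| ≤ |x| + 1 / n ∧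
      |((⌊(n : ℝ) * x⌋ : ℝ) + 1) / n| ≤ |x| + 1 / n := by
  have h0 := npos hn
  have hδ0 := frac_nonneg (n := n) x
  have hδ1 := frac_lt_one (n := n) x
  have hne : (n : ℝ) ≠ 0 := h0.ne'
  set F := (⌊(n : ℝ) * x⌋ : ℝ) with hF
  constructor
  · have he : F / n = x - ((n : ℝ) * x - F) / n := by field_simp; ring
    rw [he]
    refine (abs_sub _ _).trans ?_
    rw [abs_div, abs_of_pos h0, abs_of_nonneg hδ0]
    have : ((n : ℝ) * x - F) / n ≤ 1 / n :=
      (div_le_div_iff_of_pos_right h0).mpr hδ1.le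
    linarith
  · have he : (F + 1) / n = x + (1 - ((n : ℝ) * x - F)) / n := by field_simp; ring
    rw [he]
    refine (abs_add_le _ _).trans ?_
    rw [abs_div, abs_of_pos h0, abs_of_nonneg (by linarith : (0:ℝ) ≤ 1 - ((n : ℝ) * x - F))]
    have : (1 - ((n : ℝ) * x - F)) / n ≤ 1 / n :=
      (div_le_div_iff_of_pos_right h0).mpr (by linarith)
    linarith


lemma ds_prob (hn : 1 ≤ n) (μ : Measure ℝ) [IsProbabilityMeasure μ] :
    IsProbabilityMeasure (dsDiscretization n μ) := by
  constructor
  rw [← lintegral_one, lintegral_ds hn measurable_const]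
  calc ∫⁻ x, eInterp n (fun _ => (1:ℝ≥0∞)) x ∂μ = ∫⁻ _, (1:ℝ≥0∞) ∂μ :=
        lintegral_congr fun x => eInterp_const hn 1 x
    _ = 1 := by simp

lemma abs_f_grid_bound (hn : 1 ≤ n) {f : ℝ → ℝ} {A B : ℝ} (hB : 0 ≤ B)
    (hgrow : ∀ y, |f y| ≤ A + B * |y|) (x : ℝ) :
    |f ((⌊(n : ℝ) * x⌋ : ℝ) / n)| ≤ A + B / n + B * |x| ∧
      |f (((⌊(n : ℝ) * x⌋ : ℝ) + 1) / n)| ≤ A + B / n + B * |x| := by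
  obtain ⟨g1, g2⟩ := grid_abs hn x
  constructor
  · refine (hgrow _).trans ?_
    have h1 := mul_le_mul_of_nonneg_left g1 hB
    have e : B * (|x| + 1 / (n:ℝ)) = B / n + B * |x| := by ring
    linarith
  · refine (hgrow _).trans ?_
    have h2 := mul_le_mul_of_nonneg_left g2 hB
    have e : B * (|x| + 1 / (n:ℝ)) = B / n + B * |x| := by ring
    linarith

lemma Q_integrable (μ : Measure ℝ) [IsProbabilityMeasure μ]
    (hμ1 : Integrable (fun x => |x|) μ) (A B : ℝ) :
    Integrable (fun x => A + B / n + B * |x|) μ :=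
  (integrable_const _).add (hμ1.const_mul B)

lemma Q_lintegral_lt_top (hn : 1 ≤ n) (μ : Measure ℝ) [IsProbabilityMeasure μ]
    (hμ1 : Integrable (fun x => |x|) μ) {A B : ℝ} (hA : 0 ≤ A) (hB : 0 ≤ B) :
    ∫⁻ x, ENNReal.ofReal (A + B / n + B * |x|) ∂μ < ∞ := by
  have h0 := npos hn
  have hnn : 0 ≤ᵐ[μ] fun x => A + B / n + B * |x| :=
    ae_of_all _ fun x => by positivity
  exact (hasFiniteIntegral_iff_ofReal hnn).1 (Q_integrable μ hμ1 A B).hasFiniteIntegral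

lemma ds_moment (hn : 1 ≤ n) (μ : Measure ℝ) [IsProbabilityMeasure μ]
    (hμ1 : Integrable (fun x => |x|) μ) :
    Integrable (fun x => |x|) (dsDiscretization n μ) := by
  have h0 := npos hn
  refine ⟨(continuous_abs.aestronglyMeasurable), ?_⟩
  rw [hasFiniteIntegral_iff_ofReal (ae_of_all _ fun x => abs_nonneg x)]
  rw [lintegral_ds hn (continuous_abs.measurable.ennreal_ofReal)]
  have hb : ∀ x : ℝ, eInterp n (fun y => ENNReal.ofReal |y|) x ≤
      ENNReal.ofReal (0 + 1 / n + 1 * |x|) := by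
    intro x
    obtain ⟨g1, g2⟩ := grid_abs hn x
    exact eInterp_le hn x (ENNReal.ofReal_le_ofReal (by linarith))
      (ENNReal.ofReal_le_ofReal (by linarith))
  exact lt_of_le_of_lt (lintegral_mono hb)
    (Q_lintegral_lt_top hn μ hμ1 le_rfl zero_le_one)

lemma interp_measurable {f : ℝ → ℝ} (hf : Continuous f) :
    Measurable (interp n f) := by
  have h1 : Measurable fun x : ℝ => ((⌊(n : ℝ) * x⌋ : ℤ) : ℝ) :=
    measurable_from_top.comp (Measurable.floor (measurable_id.const_mul _))
  unfold interp
  exact ((measurable_const.sub ((measurable_id.const_mul _).sub h1)).mul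
      (hf.measurable.comp (h1.div_const _))).add
    (((measurable_id.const_mul _).sub h1).mul
      (hf.measurable.comp ((h1.add_const 1).div_const _)))

lemma interp_growth (hn : 1 ≤ n) {f : ℝ → ℝ} {A B : ℝ} (hB : 0 ≤ B)
    (hgrow : ∀ y, |f y| ≤ A + B * |y|) (x : ℝ) :
    |interp n f x| ≤ A + B / n + B * |x| := by
  obtain ⟨b1, b2⟩ := abs_f_grid_bound hn hB hgrow x
  have hδ0 := frac_nonneg (n := n) x
  have hδ1 := frac_lt_one (n := n) x
  unfold interp
  refine (abs_add_le _ _).trans ?_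
  rw [abs_mul, abs_mul, abs_of_nonneg (by linarith : (0:ℝ) ≤ 1 - ((n:ℝ)*x - ⌊(n:ℝ)*x⌋)),
    abs_of_nonneg hδ0]
  nlinarith [mul_le_mul_of_nonneg_left b1 (by linarith : (0:ℝ) ≤ 1 - ((n:ℝ)*x - ⌊(n:ℝ)*x⌋)),
    mul_le_mul_of_nonneg_left b2 hδ0]

lemma integrable_of_growth (μ : Measure ℝ) [IsProbabilityMeasure μ]
    (hμ1 : Integrable (fun x => |x|) μ) {f : ℝ → ℝ} (hmeas : AEStronglyMeasurable f μ)
    {A B : ℝ} (hgrow : ∀ x, |f x| ≤ A + B * |x|) : Integrable f μ := by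
  refine ((integrable_const A).add (hμ1.const_mul B)).mono' hmeas
    (ae_of_all _ fun x => ?_)
  rw [Real.norm_eq_abs]
  exact hgrow x


lemma eInterp_absf_bound (hn : 1 ≤ n) {f : ℝ → ℝ} {A B : ℝ} (hB : 0 ≤ B)
    (hgrow : ∀ y, |f y| ≤ A + B * |y|) (x : ℝ) :
    eInterp n (fun y => ENNReal.ofReal |f y|) x ≤ ENNReal.ofReal (A + B / n + B * |x|) := by
  obtain ⟨b1, b2⟩ := abs_f_grid_bound hn hB hgrow x
  exact eInterp_le hn x (ENNReal.ofReal_le_ofReal b1) (ENNReal.ofReal_le_ofReal b2)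

lemma integrable_ds (hn : 1 ≤ n) (μ : Measure ℝ) [IsProbabilityMeasure μ]
    (hμ1 : Integrable (fun x => |x|) μ) {f : ℝ → ℝ} (hf : Continuous f)
    {A B : ℝ} (hA : 0 ≤ A) (hB : 0 ≤ B) (hgrow : ∀ x, |f x| ≤ A + B * |x|) :
    Integrable f (dsDiscretization n μ) := by
  refine ⟨hf.aestronglyMeasurable, ?_⟩
  rw [hasFiniteIntegral_iff_norm]
  simp_rw [Real.norm_eq_abs]
  rw [lintegral_ds hn (hf.abs.measurable.ennreal_ofReal)]
  exact lt_of_le_of_lt (lintegral_mono (eInterp_absf_bound hn hB hgrow))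
    (Q_lintegral_lt_top hn μ hμ1 hA hB)

lemma integral_ds (hn : 1 ≤ n) (μ : Measure ℝ) [IsProbabilityMeasure μ]
    (hμ1 : Integrable (fun x => |x|) μ) {f : ℝ → ℝ} (hf : Continuous f)
    {A B : ℝ} (hA : 0 ≤ A) (hB : 0 ≤ B) (hgrow : ∀ x, |f x| ≤ A + B * |x|) :
    ∫ x, f x ∂(dsDiscretization n μ) = ∫ x, interp n f x ∂μ := by
  have hQfin := Q_lintegral_lt_top hn μ hμ1 hA hB
  have hInt := integrable_ds hn μ hμ1 hf hA hB hgrow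
  have hc0 : ∀ k : ℤ, 0 ≤ ∫ x in J n k, w n k x ∂μ := fun k =>
    setIntegral_nonneg (measJ k) fun x hx => w_nonneg hn hx
  calc ∫ x, f x ∂(dsDiscretization n μ)
      = ∑' k : ℤ, ∫ x, f x ∂((ENNReal.ofReal (∫ x in J n k, w n k x ∂μ)) •
          Measure.dirac ((k : ℝ) / n)) := integral_sum_measure hInt
    _ = ∑' k : ℤ, (∫ x in J n k, w n k x ∂μ) * f ((k : ℝ) / n) := by
        refine tsum_congr fun k => ?_
        rw [integral_smul_measure, integral_dirac' _ _ hf.stronglyMeasurable,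
          ENNReal.toReal_ofReal (hc0 k), smul_eq_mul]
    _ = ∑' k : ℤ, ∫ x, (J n k).indicator (fun x => w n k x * f ((k : ℝ) / n)) x ∂μ := by
        refine tsum_congr fun k => ?_
        rw [integral_indicator (measJ k), integral_mul_const]
    _ = ∫ x, ∑' k : ℤ, (J n k).indicator (fun x => w n k x * f ((k : ℝ) / n)) x ∂μ := by
        refine (integral_tsum
          (fun k => (((w_cont k).mul continuous_const).aestronglyMeasurable).indicator
            (measJ k)) ?_).symm
        have heq : ∀ k : ℤ,
            ∫⁻ x, ‖(J n k).indicator (fun x => w n k x * f ((k : ℝ) / n)) x‖ₑ ∂μ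
              = (∫⁻ x in J n k, ENNReal.ofReal (w n k x) ∂μ) *
                  ENNReal.ofReal |f ((k : ℝ) / n)| := by
          intro k
          have hpt : ∀ x : ℝ,
              ‖(J n k).indicator (fun x => w n k x * f ((k : ℝ) / n)) x‖ₑ
                = (J n k).indicator
                    (fun x => ‖w n k x * f ((k : ℝ) / n)‖ₑ) x := by
            intro x
            by_cases hx : x ∈ J n k <;> simp [hx]
          simp_rw [hpt]
          rw [lintegral_indicator (measJ k)]
          rw [setLIntegral_congr_fun (measJ k) (fun x hx => by
            rw [← ofReal_norm, Real.norm_eq_abs, abs_mul,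
              abs_of_nonneg (w_nonneg hn hx), ENNReal.ofReal_mul (w_nonneg hn hx)])]
          rw [lintegral_mul_const _ (meas_ofReal_w k)]
        refine ne_of_eq_of_ne (tsum_congr heq) ?_
        rw [sum_eq hn μ (fun y => ENNReal.ofReal |f y|)]
        exact (lt_of_le_of_lt (lintegral_mono (eInterp_absf_bound hn hB hgrow)) hQfin).ne
    _ = ∫ x, interp n f x ∂μ := by
        refine integral_congr_ae (ae_of_all _ fun x => ?_)
        beta_reduce
        rw [key_tsum hn, w_floor, w_floor_succ]
        unfold interp
        push_cast
        ring


/-- The affine function agreeing with `f` on the grid segment `[r/n, (r+1)/n]`. -/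
def ell (n : ℕ) (f : ℝ → ℝ) (r : ℝ) (x : ℝ) : ℝ :=
  f (r / n) + (n : ℝ) * (f ((r + 1) / n) - f (r / n)) * (x - r / n)

lemma interp_eq_ell (hn : 1 ≤ n) (f : ℝ → ℝ) (x : ℝ) :
    interp n f x = ell n f (⌊(n : ℝ) * x⌋ : ℝ) x := by
  have h0 := npos hn
  have hne : (n : ℝ) ≠ 0 := h0.ne'
  unfold interp ell
  set F := (⌊(n : ℝ) * x⌋ : ℝ) with hF
  rw [show (n : ℝ) * (f ((F + 1) / n) - f (F / n)) * (x - F / n)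
      = (f ((F + 1) / n) - f (F / n)) * ((n : ℝ) * x - F) from by field_simp]
  ring

lemma slope_mono (hn : 1 ≤ n) {f : ℝ → ℝ} (hf : ConvexOn ℝ Set.univ f) (r : ℝ) :
    f ((r + 1) / n) - f (r / n) ≤ f ((r + 2) / n) - f ((r + 1) / n) := by
  have h0 := npos hn
  have hne : (n : ℝ) ≠ 0 := h0.ne'
  have hc := hf.2 (Set.mem_univ (r / n)) (Set.mem_univ ((r + 2) / n))
    (by norm_num : (0:ℝ) ≤ 1/2) (by norm_num : (0:ℝ) ≤ 1/2) (by norm_num)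
  simp only [smul_eq_mul] at hc
  have he : (1:ℝ)/2 * (r / n) + 1/2 * ((r + 2) / n) = (r + 1) / n := by field_simp; ring
  rw [he] at hc
  linarith

lemma ell_step_up (hn : 1 ≤ n) {f : ℝ → ℝ} (hf : ConvexOn ℝ Set.univ f) (r x : ℝ)
    (hx : (r + 1) / n ≤ x) : ell n f r x ≤ ell n f (r + 1) x := by
  have h0 := npos hn
  have hne : (n : ℝ) ≠ 0 := h0.ne'
  have hs := slope_mono hn hf r
  have hx' : 0 ≤ x - (r + 1) / n := sub_nonneg.2 hx
  unfold ell
  rw [show r + 1 + 1 = r + 2 from by ring]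
  have lhs_eq : f (r / n) + (n : ℝ) * (f ((r + 1) / n) - f (r / n)) * (x - r / n)
      = f ((r + 1) / n) + (n : ℝ) * (f ((r + 1) / n) - f (r / n)) * (x - (r + 1) / n) := by
    field_simp
    ring
  rw [lhs_eq]
  have h2 := mul_le_mul_of_nonneg_right hs hx'
  nlinarith [h2, h0]

lemma ell_step_down (hn : 1 ≤ n) {f : ℝ → ℝ} (hf : ConvexOn ℝ Set.univ f) (r x : ℝ)
    (hx : x ≤ (r + 1) / n) : ell n f (r + 1) x ≤ ell n f r x := by
  have h0 := npos hn
  have hne : (n : ℝ) ≠ 0 := h0.ne'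
  have hs := slope_mono hn hf r
  have hx' : x - (r + 1) / n ≤ 0 := sub_nonpos.2 hx
  unfold ell
  rw [show r + 1 + 1 = r + 2 from by ring]
  have lhs_eq : f (r / n) + (n : ℝ) * (f ((r + 1) / n) - f (r / n)) * (x - r / n)
      = f ((r + 1) / n) + (n : ℝ) * (f ((r + 1) / n) - f (r / n)) * (x - (r + 1) / n) := by
    field_simp
    ring
  rw [lhs_eq]
  have h2 := mul_le_mul_of_nonpos_right hs hx'
  nlinarith [h2, h0]

lemma ell_chain_up (hn : 1 ≤ n) {f : ℝ → ℝ} (hf : ConvexOn ℝ Set.univ f) (r : ℝ) (d : ℕ)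
    (x : ℝ) (hx : (r + d) / n ≤ x) : ell n f r x ≤ ell n f (r + d) x := by
  have h0 := npos hn
  induction d with
  | zero => simp
  | succ d ih =>
    have hd : (r + d) / n ≤ x := by
      refine le_trans ?_ hx
      refine (div_le_div_iff_of_pos_right h0).mpr ?_
      push_cast
      linarith
    have hstep : ell n f (r + d) x ≤ ell n f (r + d + 1) x := by
      refine ell_step_up hn hf _ x ?_
      refine le_trans (le_of_eq ?_) hx
      push_cast
      ring
    calc ell n f r x ≤ ell n f (r + d) x := ih hd
      _ ≤ ell n f (r + d + 1) x := hstep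
      _ = ell n f (r + (d + 1 : ℕ)) x := by
          congr 1
          push_cast
          ring

lemma ell_chain_down (hn : 1 ≤ n) {f : ℝ → ℝ} (hf : ConvexOn ℝ Set.univ f) (r : ℝ) (d : ℕ)
    (x : ℝ) (hx : x ≤ (r + 1) / n) : ell n f (r + d) x ≤ ell n f r x := by
  have h0 := npos hn
  induction d with
  | zero => simp
  | succ d ih =>
    have hstep : ell n f (r + d + 1) x ≤ ell n f (r + d) x := by
      refine ell_step_down hn hf _ x ?_
      refine le_trans hx ?_
      refine (div_le_div_iff_of_pos_right h0).mpr ?_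
      push_cast
      linarith
    calc ell n f (r + (d + 1 : ℕ)) x = ell n f (r + d + 1) x := by
          congr 1
          push_cast
          ring
      _ ≤ ell n f (r + d) x := hstep
      _ ≤ ell n f r x := ih

lemma ell_le_interp (hn : 1 ≤ n) {f : ℝ → ℝ} (hf : ConvexOn ℝ Set.univ f) (k : ℤ) (x : ℝ) :
    ell n f (k : ℝ) x ≤ interp n f x := by
  have h0 := npos hn
  rw [interp_eq_ell hn]
  set m := ⌊(n : ℝ) * x⌋ with hm
  have hmx : ((m : ℝ)) / n ≤ x := by
    rw [div_le_iff₀ h0]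
    have := Int.floor_le ((n : ℝ) * x)
    linarith
  have hxm : x ≤ ((m : ℝ) + 1) / n := by
    rw [le_div_iff₀ h0]
    have := Int.lt_floor_add_one ((n : ℝ) * x)
    linarith
  rcases le_or_gt k m with hkm | hmk
  · obtain ⟨d, hd⟩ : ∃ d : ℕ, m = k + (d : ℤ) := ⟨(m - k).toNat, by omega⟩
    have hcast : (k : ℝ) + (d : ℕ) = (m : ℝ) := by
      rw [hd]
      push_cast
      ring
    calc ell n f (k : ℝ) x ≤ ell n f ((k : ℝ) + (d : ℕ)) x :=
          ell_chain_up hn hf (k : ℝ) d x (by rw [hcast]; exact hmx)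
      _ = ell n f (m : ℝ) x := by rw [hcast]
  · obtain ⟨d, hd⟩ : ∃ d : ℕ, k = m + (d : ℤ) := ⟨(k - m).toNat, by omega⟩
    have hcast : (m : ℝ) + (d : ℕ) = (k : ℝ) := by
      rw [hd]
      push_cast
      ring
    calc ell n f (k : ℝ) x = ell n f ((m : ℝ) + (d : ℕ)) x := by rw [hcast]
      _ ≤ ell n f (m : ℝ) x := ell_chain_down hn hf (m : ℝ) d x hxm

lemma interp_convex (hn : 1 ≤ n) {f : ℝ → ℝ} (hf : ConvexOn ℝ Set.univ f) :
    ConvexOn ℝ Set.univ (interp n f) := by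
  refine ⟨convex_univ, fun x _ y _ a b ha hb hab => ?_⟩
  rw [smul_eq_mul, smul_eq_mul, smul_eq_mul, smul_eq_mul]
  set z := a * x + b * y with hz
  rw [interp_eq_ell hn]
  set r := (⌊(n : ℝ) * z⌋ : ℝ) with hr
  have haff : ell n f r z = a * ell n f r x + b * ell n f r y := by
    unfold ell
    have hb' : b = 1 - a := by linarith
    subst hb'
    ring
  rw [haff]
  exact add_le_add (mul_le_mul_of_nonneg_left (ell_le_interp hn hf _ x) ha)
    (mul_le_mul_of_nonneg_left (ell_le_interp hn hf _ y) hb)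

lemma le_interp (hn : 1 ≤ n) {f : ℝ → ℝ} (hf : ConvexOn ℝ Set.univ f) (x : ℝ) :
    f x ≤ interp n f x := by
  have h0 := npos hn
  have hne : (n : ℝ) ≠ 0 := h0.ne'
  have hδ0 := frac_nonneg (n := n) x
  have hδ1 := frac_lt_one (n := n) x
  set F := (⌊(n : ℝ) * x⌋ : ℝ) with hF
  have hx : x = (1 - ((n : ℝ) * x - F)) * (F / n) + ((n : ℝ) * x - F) * ((F + 1) / n) := by
    field_simp
    ring
  have hc := hf.2 (Set.mem_univ (F / n)) (Set.mem_univ ((F + 1) / n))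
    (by linarith : (0:ℝ) ≤ 1 - ((n : ℝ) * x - F)) hδ0 (by ring)
  rw [smul_eq_mul, smul_eq_mul] at hc
  rw [← hx] at hc
  exact hc


/-- The natural coupling between `dsDiscretization n μ` and `μ`. -/
def cpl (n : ℕ) (μ : Measure ℝ) : Measure (ℝ × ℝ) :=
  Measure.sum fun k : ℤ =>
    ((μ.restrict (J n k)).withDensity fun x => ENNReal.ofReal (w n k x)).map
      fun x => (((k : ℝ) / n), x)

lemma meas_pair (k : ℤ) : Measurable fun x : ℝ => (((k : ℝ) / n), x) :=
  measurable_const.prodMk measurable_id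

lemma cpl_fst (hn : 1 ≤ n) (μ : Measure ℝ) [IsProbabilityMeasure μ] :
    (cpl n μ).map Prod.fst = dsDiscretization n μ := by
  rw [cpl, Measure.map_sum measurable_fst.aemeasurable, dsDiscretization]
  congr 1
  funext k
  rw [Measure.map_map measurable_fst (meas_pair k)]
  have hcomp : (Prod.fst ∘ fun x : ℝ => (((k : ℝ) / n), x)) = fun _ => (k : ℝ) / n := rfl
  rw [hcomp, Measure.map_const]
  have hmass : ((μ.restrict (J n k)).withDensity fun x => ENNReal.ofReal (w n k x)) Set.univ
      = ENNReal.ofReal (∫ x in Set.Ico (((k : ℝ) - 1) / n) (((k : ℝ) + 1) / n),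
          (1 - |(n : ℝ) * x - k|) ∂μ) := by
    rw [withDensity_apply _ MeasurableSet.univ, Measure.restrict_univ]
    exact (ofReal_intw hn k).symm
  rw [hmass]
 
lemma cpl_snd (hn : 1 ≤ n) (μ : Measure ℝ) [IsProbabilityMeasure μ] :
    (cpl n μ).map Prod.snd = μ := by
  rw [cpl, Measure.map_sum measurable_snd.aemeasurable]
  have hcomp : ∀ k : ℤ,
      (((μ.restrict (J n k)).withDensity fun x => ENNReal.ofReal (w n k x)).map
        (fun x => (((k : ℝ) / n), x))).map Prod.snd =
      ((μ.restrict (J n k)).withDensity fun x => ENNReal.ofReal (w n k x)) := by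
    intro k
    rw [Measure.map_map measurable_snd (meas_pair k)]
    have : (Prod.snd ∘ fun x : ℝ => (((k : ℝ) / n), x)) = id := rfl
    rw [this, Measure.map_id]
  simp_rw [hcomp]
  ext s hs
  rw [Measure.sum_apply _ hs]
  have hterm : ∀ k : ℤ,
      ((μ.restrict (J n k)).withDensity fun x => ENNReal.ofReal (w n k x)) s =
        ∫⁻ x, s.indicator ((J n k).indicator fun x => ENNReal.ofReal (w n k x)) x ∂μ := by
    intro k
    rw [withDensity_apply _ hs, Measure.restrict_restrict hs, ← lintegral_indicator (hs.inter (measJ k)),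
      ← Set.indicator_indicator]
  simp_rw [hterm]
  rw [← lintegral_tsum fun k =>
    (((meas_ofReal_w k).indicator (measJ k)).indicator hs).aemeasurable]
  have hpt : ∀ x : ℝ,
      (∑' k : ℤ, s.indicator ((J n k).indicator fun x => ENNReal.ofReal (w n k x)) x) =
        s.indicator (fun _ => (1 : ℝ≥0∞)) x := by
    intro x
    by_cases hx : x ∈ s
    · simp only [Set.indicator_of_mem hx]
      rw [key_tsum hn, w_floor, w_floor_succ,
        ← ENNReal.ofReal_add (by linarith [frac_lt_one (n := n) x]) (frac_nonneg x)]
      norm_num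
    · simp [Set.indicator_of_notMem hx]
  calc ∫⁻ x, ∑' k : ℤ, s.indicator ((J n k).indicator fun x => ENNReal.ofReal (w n k x)) x ∂μ
      = ∫⁻ x, s.indicator (fun _ => (1 : ℝ≥0∞)) x ∂μ := lintegral_congr hpt
    _ = μ s := by rw [lintegral_indicator hs, setLIntegral_one]

lemma cpl_cost (hn : 1 ≤ n) (μ : Measure ℝ) [IsProbabilityMeasure μ] :
    ∫⁻ p, ENNReal.ofReal |p.1 - p.2| ∂(cpl n μ) ≤ ENNReal.ofReal (1 / n) := by
  have hmc : Measurable fun p : ℝ × ℝ => ENNReal.ofReal |p.1 - p.2| :=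
    ((continuous_fst.sub continuous_snd).abs).measurable.ennreal_ofReal
  rw [cpl, lintegral_sum_measure]
  have hk : ∀ k : ℤ,
      ∫⁻ p, ENNReal.ofReal |p.1 - p.2|
          ∂(((μ.restrict (J n k)).withDensity fun x => ENNReal.ofReal (w n k x)).map
            (fun x => (((k : ℝ) / n), x))) ≤
        (∫⁻ x in J n k, ENNReal.ofReal (w n k x) ∂μ) * ENNReal.ofReal (1 / n) := by
    intro k
    rw [lintegral_map hmc (meas_pair k)]
    rw [lintegral_withDensity_eq_lintegral_mul _ (meas_ofReal_w k)
      (fun s hs => by exact ((continuous_const.sub continuous_id).abs).measurable.ennreal_ofReal hs)]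
    calc ∫⁻ x in J n k, ENNReal.ofReal (w n k x) * ENNReal.ofReal |(k : ℝ) / n - x| ∂μ
        ≤ ∫⁻ x in J n k, ENNReal.ofReal (w n k x) * ENNReal.ofReal (1 / n) ∂μ := by
          refine lintegral_mono_ae ((ae_restrict_iff' (measJ k)).2 (ae_of_all _ fun x hx => ?_))
          exact mul_le_mul_right (ENNReal.ofReal_le_ofReal (dist_le_of_mem_J hn hx)) _
      _ = (∫⁻ x in J n k, ENNReal.ofReal (w n k x) ∂μ) * ENNReal.ofReal (1 / n) :=
          lintegral_mul_const _ (meas_ofReal_w k)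
  calc ∑' k : ℤ, ∫⁻ p, ENNReal.ofReal |p.1 - p.2|
          ∂(((μ.restrict (J n k)).withDensity fun x => ENNReal.ofReal (w n k x)).map
            (fun x => (((k : ℝ) / n), x)))
      ≤ ∑' k : ℤ, (∫⁻ x in J n k, ENNReal.ofReal (w n k x) ∂μ) * ENNReal.ofReal (1 / n) :=
        ENNReal.tsum_le_tsum hk
    _ = ∫⁻ x, eInterp n (fun _ => ENNReal.ofReal (1 / n)) x ∂μ :=
        sum_eq hn μ fun _ => ENNReal.ofReal (1 / n)
    _ = ∫⁻ _, ENNReal.ofReal (1 / n) ∂μ := lintegral_congr fun x => eInterp_const hn _ x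
    _ = ENNReal.ofReal (1 / n) := by simp


lemma W1_ds (hn : 1 ≤ n) (μ : Measure ℝ) [IsProbabilityMeasure μ] :
    W1 (dsDiscretization n μ) μ ≤ ENNReal.ofReal (1 / n) := by
  have hc : cpl n μ ∈ Coupling (dsDiscretization n μ) μ := ⟨cpl_fst hn μ, cpl_snd hn μ⟩
  calc W1 (dsDiscretization n μ) μ ≤ ∫⁻ p, ENNReal.ofReal |p.1 - p.2| ∂(cpl n μ) :=
        iInf₂_le _ hc
    _ ≤ ENNReal.ofReal (1 / n) := cpl_cost hn μ

lemma ds_ord_self (hn : 1 ≤ n) (μ : Measure ℝ) [IsProbabilityMeasure μ]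
    (hμ1 : Integrable (fun x => |x|) μ) : ConvexOrderLG μ (dsDiscretization n μ) := by
  rintro f hconv ⟨A, B, hgrow⟩
  have hf : Continuous f := continuousOn_univ.mp
    (hconv.continuousOn isOpen_univ)
  have hgrow' : ∀ x, |f x| ≤ A + |B| * |x| := fun x => (hgrow x).trans
    (add_le_add_right (mul_le_mul_of_nonneg_right (le_abs_self B) (abs_nonneg x)) A)
  have hA : 0 ≤ A := by
    have h0 := hgrow' 0
    simp only [abs_zero, mul_zero, add_zero] at h0
    linarith [abs_nonneg (f 0)]
  rw [integral_ds hn μ hμ1 hf hA (abs_nonneg B) hgrow']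
  exact integral_mono (integrable_of_growth μ hμ1 hf.aestronglyMeasurable hgrow')
    (integrable_of_growth μ hμ1 (interp_measurable hf).aestronglyMeasurable
      (interp_growth hn (abs_nonneg B) hgrow'))
    (fun x => le_interp hn hconv x)

lemma ds_ord_pair (hn : 1 ≤ n) (μ ν : Measure ℝ) [IsProbabilityMeasure μ]
    [IsProbabilityMeasure ν] (hμ1 : Integrable (fun x => |x|) μ)
    (hν1 : Integrable (fun x => |x|) ν) (hord : ConvexOrderLG μ ν) :
    ConvexOrderLG (dsDiscretization n μ) (dsDiscretization n ν) := by
  rintro f hconv ⟨A, B, hgrow⟩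
  have hf : Continuous f := continuousOn_univ.mp
    (hconv.continuousOn isOpen_univ)
  have hgrow' : ∀ x, |f x| ≤ A + |B| * |x| := fun x => (hgrow x).trans
    (add_le_add_right (mul_le_mul_of_nonneg_right (le_abs_self B) (abs_nonneg x)) A)
  have hA : 0 ≤ A := by
    have h0 := hgrow' 0
    simp only [abs_zero, mul_zero, add_zero] at h0
    linarith [abs_nonneg (f 0)]
  rw [integral_ds hn μ hμ1 hf hA (abs_nonneg B) hgrow',
    integral_ds hn ν hν1 hf hA (abs_nonneg B) hgrow']
  exact hord (interp n f) (interp_convex hn hconv)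
    ⟨A + |B| / n, |B|, fun x => interp_growth hn (abs_nonneg B) hgrow' x⟩

end DSAux

theorem dsDiscretization_properties (n : ℕ) (hn : 1 ≤ n) (μ ν : Measure ℝ)
    [IsProbabilityMeasure μ] [IsProbabilityMeasure ν]
    (hμ1 : Integrable (fun x => |x|) μ) (hν1 : Integrable (fun x => |x|) ν)
    (hord : ConvexOrderLG μ ν) :
    -- (a) probability measures with finite first moments
    (IsProbabilityMeasure (dsDiscretization n μ) ∧
      IsProbabilityMeasure (dsDiscretization n ν) ∧
      Integrable (fun x => |x|) (dsDiscretization n μ) ∧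
      Integrable (fun x => |x|) (dsDiscretization n ν)) ∧
    -- (b) convex orders
    (ConvexOrderLG (dsDiscretization n μ) (dsDiscretization n ν) ∧
      ConvexOrderLG μ (dsDiscretization n μ) ∧
      ConvexOrderLG ν (dsDiscretization n ν)) ∧
    -- (c) Wasserstein bounds
    (W1 (dsDiscretization n μ) μ ≤ ENNReal.ofReal (1 / n) ∧
      W1 (dsDiscretization n ν) ν ≤ ENNReal.ofReal (1 / n)) :=
  ⟨⟨DSAux.ds_prob hn μ, DSAux.ds_prob hn ν, DSAux.ds_moment hn μ hμ1,
      DSAux.ds_moment hn ν hν1⟩,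
    ⟨DSAux.ds_ord_pair hn μ ν hμ1 hν1 hord, DSAux.ds_ord_self hn μ hμ1,
      DSAux.ds_ord_self hn ν hν1⟩,
    DSAux.W1_ds hn μ, DSAux.W1_ds hn ν⟩
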